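/- arXiv:math/0504407 — 4 statements merged into one kernel-verified Lean document; each statement's English description precedes it below -/
import Mathlib

section
/- Suppose l(k) is not identically zero as a polynomial in k. Then the ℂ-linear map P : ℂ[[x]]^N → ℂ[[x]]^N has finite-dimensional kernel and cokernel over ℂ, and its index equals nN, i.e. χ(P; ℂ[[x]]^N) = dim ker P − dim coker P = N·max_{0≤i≤m}(i − ν(A_i)). -/
open Polynomial PowerSeries

noncomputable section

/-- ν(A): minimum over the entries of a polynomial matrix of the order of vanishing
at `x = 0` (`⊤` for the zero matrix), as a natural number via `toNat`. -/
def matNu {N : ℕ} (A : Matrix (Fin N) (Fin N) (Polynomial ℂ)) : ℕ :=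
  (⨅ i, ⨅ j, (A i j).trailingDegree).toNat

/-- The coefficient matrix `A^{ν(A)}` of `x^{ν(A)}` in `A`. -/
def trailMat {N : ℕ} (A : Matrix (Fin N) (Fin N) (Polynomial ℂ)) : Matrix (Fin N) (Fin N) ℂ :=
  fun i j => (A i j).coeff (matNu A)

open Classical in
/-- The matrix `L(k) = Σ_{j ∈ J} k(k-1)⋯(k-j+1) A_j^{n_j}`, where
`J = {j : A_j ≠ 0 ∧ j - ν(A_j) = n}`. -/
def Lmat {N m : ℕ} (A : Fin (m + 1) → Matrix (Fin N) (Fin N) (Polynomial ℂ)) (n : ℤ)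
    (k : ℂ) : Matrix (Fin N) (Fin N) ℂ :=
  ∑ j : Fin (m + 1),
    if A j ≠ 0 ∧ (j : ℤ) - matNu (A j) = n then
      (∏ t ∈ Finset.range (j : ℕ), (k - t)) • trailMat (A j)
    else 0

/-- The differential operator `P = Σ_{i=0}^m A_i(x) (d/dx)^i` acting ℂ-linearly on
`ℂ[[x]]^N`. -/
def Pop {N m : ℕ} (A : Fin (m + 1) → Matrix (Fin N) (Fin N) (Polynomial ℂ)) :
    Module.End ℂ (Fin N → PowerSeries ℂ) :=
  ∑ i : Fin (m + 1),
    LinearMap.pi fun b : Fin N =>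
      ∑ c : Fin N,
        (LinearMap.mulLeft ℂ ((A i b c : Polynomial ℂ) : PowerSeries ℂ) ∘ₗ
            (((PowerSeries.derivative ℂ).toLinearMap : Module.End ℂ (PowerSeries ℂ)) ^ (i : ℕ))) ∘ₗ
          LinearMap.proj c

/-- A formal power series is convergent if it has positive radius of convergence. -/
def PSConvergent (f : PowerSeries ℂ) : Prop :=
  ∃ r : ℝ, 0 < r ∧ Summable fun j : ℕ => ‖PowerSeries.coeff j f‖ * r ^ j

end

/-!
In coefficients, `P` becomes a triangular operator on sequences `ℕ → ℂᴺ`: the `r`-th coefficient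
of `P u` involves only the coefficients `u_j` with `j ≤ r + n`, and that of `u_{r+n}` is
`L(r + n)`. Since `l` has finitely many roots, `L(k)` is invertible for all `k ≥ k₀`, and then `P`
maps the series of order `≥ k₀` bijectively onto those of order `≥ k₀ - n`. Passing to the
finite-dimensional quotients by these subspaces changes neither kernel nor cokernel, so
`χ(P) = k₀ N - (k₀ - n) N = n N`.
-/

open Module LinearMap

section Index

variable {K V W V₁ W₁ : Type*} [Field K] [AddCommGroup V] [Module K V] [AddCommGroup W] [Module K W]
  [AddCommGroup V₁] [Module K V₁] [AddCommGroup W₁] [Module K W₁]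

def HasIndex (T : V →ₗ[K] W) (χ : ℤ) : Prop :=
  FiniteDimensional K (ker T) ∧ FiniteDimensional K (W ⧸ range T) ∧
    (finrank K (ker T) : ℤ) - finrank K (W ⧸ range T) = χ

theorem HasIndex.of_equiv {T : V →ₗ[K] W} {S : V₁ →ₗ[K] W₁} {χ : ℤ} (hS : HasIndex S χ)
    (eker : ker T ≃ₗ[K] ker S) (ecoker : (W ⧸ range T) ≃ₗ[K] (W₁ ⧸ range S)) : HasIndex T χ := by
  obtain ⟨_, _, hχ⟩ := hS
  exact ⟨eker.symm.finiteDimensional, ecoker.symm.finiteDimensional,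
    by rw [eker.finrank_eq, ecoker.finrank_eq, hχ]⟩

theorem HasIndex.of_conj {T : Module.End K V} {χ : ℤ} (e : V ≃ₗ[K] V₁) (h : HasIndex (e.conj T) χ) :
    HasIndex T χ := by
  have hker : (ker T).map (e : V →ₗ[K] V₁) = ker (e.conj T) := by
    rw [LinearEquiv.conj_apply, ker_comp, LinearEquiv.ker_comp, Submodule.comap_equiv_eq_map_symm,
      LinearEquiv.symm_symm]
  have hrange : (range T).map (e : V →ₗ[K] V₁) = range (e.conj T) := by
    rw [LinearEquiv.conj_apply, LinearEquiv.range_comp, range_comp]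
  exact h.of_equiv ((e.submoduleMap _).trans (LinearEquiv.ofEq _ _ hker))
    (Submodule.Quotient.equiv _ _ e hrange)

theorem hasIndex_of_finiteDimensional [FiniteDimensional K V] [FiniteDimensional K W]
    (T : V →ₗ[K] W) : HasIndex T (finrank K V - finrank K W) := by
  refine ⟨inferInstance, inferInstance, ?_⟩
  have hV := T.finrank_range_add_finrank_ker
  have hW := (range T).finrank_quotient_add_finrank
  omega

theorem HasIndex.of_map_eq {T : V →ₗ[K] W} {V' : Submodule K V} {W' : Submodule K W}
    [FiniteDimensional K (V ⧸ V')] [FiniteDimensional K (W ⧸ W')]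
    (hmap : V'.map T = W') (hinj : Disjoint V' (ker T)) :
    HasIndex T (finrank K (V ⧸ V') - finrank K (W ⧸ W')) := by
  have hle : V' ≤ W'.comap T := Submodule.map_le_iff_le_comap.mp hmap.le
  set S := V'.mapQ W' T hle
  have hrange : W' ≤ range T := hmap ▸ LinearMap.map_le_range
  have hker : (ker T).map V'.mkQ = ker S := by
    rw [Submodule.ker_mapQ, ← hmap, Submodule.comap_map_eq, Submodule.map_sup,
      Submodule.mkQ_map_self, bot_sup_eq]
  have hinj' : Function.Injective (V'.mkQ.comp (ker T).subtype) := by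
    rw [← ker_eq_bot, ker_comp, Submodule.ker_mkQ, ← Submodule.disjoint_iff_comap_eq_bot]
    exact hinj.symm
  refine (hasIndex_of_finiteDimensional S).of_equiv
    ((LinearEquiv.ofInjective _ hinj').trans (LinearEquiv.ofEq _ _ ?_))
    ((Submodule.quotientQuotientEquivQuotient W' (range T) hrange).symm.trans
      (Submodule.quotEquivOfEq _ _ ?_))
  · rw [range_comp, Submodule.range_subtype, hker]
  · rw [Submodule.range_mapQ]

end Index

section Triangular

variable {R M M' : Type*} [Ring R] [AddCommGroup M] [Module R M] [AddCommGroup M'] [Module R M']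

variable (R M) in
def vanishingBelow (k : ℕ) : Submodule R (ℕ → M) :=
  ker (LinearMap.pi fun j : Fin k => LinearMap.proj (R := R) (φ := fun _ => M) (j : ℕ))

theorem mem_vanishingBelow {k : ℕ} {v : ℕ → M} :
    v ∈ vanishingBelow R M k ↔ ∀ j < k, v j = 0 := by
  simp [vanishingBelow, funext_iff, Fin.forall_iff]

-- The shift `k₀ - r₀` may be negative, so it is encoded by two natural offsets.
structure IsTriangular (T : (ℕ → M) →ₗ[R] (ℕ → M')) (k₀ r₀ : ℕ) (D : ℕ → M →ₗ[R] M') : Prop where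
  apply_eq_zero : ∀ v r, (∀ j, j + r₀ ≤ r + k₀ → v j = 0) → T v r = 0
  apply_single : ∀ k, k₀ ≤ k → ∀ x, T (Pi.single k x) (k - k₀ + r₀) = D k x

namespace IsTriangular

variable {T : (ℕ → M) →ₗ[R] (ℕ → M')} {k₀ r₀ : ℕ} {D : ℕ → M →ₗ[R] M'}

theorem apply_eq_truncate_add (hT : IsTriangular T k₀ r₀ D) (v : ℕ → M) {k : ℕ} (hk : k₀ ≤ k) :
    T v (k - k₀ + r₀) = T (fun j => if j < k then v j else 0) (k - k₀ + r₀) + D k (v k) := by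
  rw [← hT.apply_single k hk, ← Pi.add_apply, ← map_add, ← sub_eq_zero, ← Pi.sub_apply, ← map_sub]
  refine hT.apply_eq_zero _ _ fun j hj => ?_
  rcases lt_trichotomy j k with hjk | rfl | hjk
  · simp [hjk, hjk.ne]
  · simp
  · omega

theorem map_vanishingBelow_le (hT : IsTriangular T k₀ r₀ D) :
    (vanishingBelow R M k₀).map T ≤ vanishingBelow R M' r₀ := by
  intro _ ⟨v, hv, hw⟩
  rw [← hw, mem_vanishingBelow]
  rw [SetLike.mem_coe, mem_vanishingBelow] at hv
  exact fun r hr => hT.apply_eq_zero v r fun j hj => hv j (by omega)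

theorem disjoint_vanishingBelow_ker (hT : IsTriangular T k₀ r₀ D)
    (hD : ∀ k, k₀ ≤ k → Function.Injective (D k)) :
    Disjoint (vanishingBelow R M k₀) (ker T) := by
  rw [Submodule.disjoint_def]
  intro v hv hTv
  rw [mem_vanishingBelow] at hv
  rw [LinearMap.mem_ker] at hTv
  funext k
  induction k using Nat.strong_induction_on with
  | _ k ih =>
    by_cases hk : k < k₀
    · exact hv k hk
    · have htrunc : (fun j => if j < k then v j else 0) = 0 := by
        funext j; split_ifs with hj
        exacts [ih j hj, rfl]
      have := hT.apply_eq_truncate_add v (not_lt.mp hk)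
      rw [hTv, htrunc, map_zero] at this
      exact hD k (not_lt.mp hk) (by simpa using this.symm)

-- Forward substitution for `T v = w`, given right inverses `G k` of the diagonal blocks `D k`.
variable (T k₀ r₀) in
def solve (G : ℕ → M' → M) (w : ℕ → M') : ℕ → M
  | k => if k < k₀ then 0 else
      G k (w (k - k₀ + r₀) - T (fun j => if j < k then solve G w j else 0) (k - k₀ + r₀))

theorem map_vanishingBelow (hT : IsTriangular T k₀ r₀ D)
    (hD : ∀ k, k₀ ≤ k → Function.Surjective (D k)) :
    (vanishingBelow R M k₀).map T = vanishingBelow R M' r₀ := by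
  refine hT.map_vanishingBelow_le.antisymm fun w hw => ?_
  set v := solve T k₀ r₀ (fun k => Function.invFun (D k)) w
  have hv : v ∈ vanishingBelow R M k₀ :=
    mem_vanishingBelow.mpr fun k hk => by simp [v, solve, hk]
  refine ⟨v, hv, funext fun r => ?_⟩
  by_cases hr : r < r₀
  · rw [mem_vanishingBelow.mp hw r hr]
    exact mem_vanishingBelow.mp (hT.map_vanishingBelow_le ⟨v, hv, rfl⟩) r hr
  · obtain ⟨k, hk, rfl⟩ : ∃ k, k₀ ≤ k ∧ r = k - k₀ + r₀ := ⟨r - r₀ + k₀, by omega, by omega⟩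
    rw [hT.apply_eq_truncate_add v hk]
    rw [show v k = _ from solve.eq_1 .., if_neg (not_lt.mpr hk),
      Function.rightInverse_invFun (hD k hk)]
    abel

end IsTriangular

end Triangular

section FiniteQuotient

variable {K M M' : Type*} [Field K] [AddCommGroup M] [Module K M] [AddCommGroup M'] [Module K M']

noncomputable def quotientVanishingBelowEquiv (k : ℕ) :
    ((ℕ → M) ⧸ vanishingBelow K M k) ≃ₗ[K] (Fin k → M) :=
  LinearMap.quotKerEquivOfSurjective _ Fin.val_injective.surjective_comp_right

instance [FiniteDimensional K M] (k : ℕ) : FiniteDimensional K ((ℕ → M) ⧸ vanishingBelow K M k) :=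
  (quotientVanishingBelowEquiv k).symm.finiteDimensional

theorem finrank_quotient_vanishingBelow [FiniteDimensional K M] (k : ℕ) :
    finrank K ((ℕ → M) ⧸ vanishingBelow K M k) = k * finrank K M := by
  rw [(quotientVanishingBelowEquiv k).finrank_eq, finrank_pi_fintype, Finset.sum_const,
    Finset.card_univ, Fintype.card_fin, smul_eq_mul]

theorem IsTriangular.hasIndex [FiniteDimensional K M] [FiniteDimensional K M']
    {T : (ℕ → M) →ₗ[K] (ℕ → M')} {k₀ r₀ : ℕ} {D : ℕ → M →ₗ[K] M'} (hT : IsTriangular T k₀ r₀ D)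
    (hD : ∀ k, k₀ ≤ k → Function.Bijective (D k)) :
    HasIndex T (k₀ * finrank K M - r₀ * finrank K M') := by
  have h := HasIndex.of_map_eq (hT.map_vanishingBelow fun k hk => (hD k hk).2)
    (hT.disjoint_vanishingBelow_ker fun k hk => (hD k hk).1)
  rwa [finrank_quotient_vanishingBelow, finrank_quotient_vanishingBelow, Nat.cast_mul,
    Nat.cast_mul] at h

end FiniteQuotient

section Coefficients

variable (R ι : Type*) [CommRing R]

noncomputable def coeffEquiv : (ι → R⟦X⟧) ≃ₗ[R] (ℕ → ι → R) where
  toFun u k b := PowerSeries.coeff k (u b)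
  invFun v b := PowerSeries.mk fun k => v k b
  map_add' u v := by funext k b; simp
  map_smul' c u := by funext k b; simp
  left_inv u := by funext b; ext k; simp
  right_inv v := by funext k b; simp

variable {R ι}

theorem coeffEquiv_symm_single [DecidableEq ι] (k : ℕ) (x : ι → R) :
    (coeffEquiv R ι).symm (Pi.single k x) = fun b => PowerSeries.monomial k (x b) := by
  funext b; ext j
  simp [coeffEquiv, PowerSeries.coeff_monomial, Pi.single_apply, apply_ite (fun f : ι → R => f b)]

end Coefficients

open Finset
open scoped Matrix

theorem coeff_eq_zero_of_lt_matNu {N : ℕ} (B : Matrix (Fin N) (Fin N) ℂ[X]) (b c : Fin N) {s : ℕ}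
    (hs : s < matNu B) : (B b c).coeff s = 0 := by
  apply coeff_eq_zero_of_lt_trailingDegree
  calc (s : ℕ∞) < matNu B := by exact_mod_cast hs
    _ ≤ ⨅ i, ⨅ j, (B i j).trailingDegree := ENat.natCast_toNat_le_self _
    _ ≤ (B b c).trailingDegree := iInf_le_of_le b (iInf_le _ c)

theorem matNu_le_of_coeff_ne_zero {N : ℕ} {B : Matrix (Fin N) (Fin N) ℂ[X]} {b c : Fin N} {s : ℕ}
    (h : (B b c).coeff s ≠ 0) : B ≠ 0 ∧ matNu B ≤ s :=
  ⟨fun hB => h (by simp [hB]), not_lt.mp fun hs => h (coeff_eq_zero_of_lt_matNu B b c hs)⟩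

section DifferentialOperator

variable {N m : ℕ} (A : Fin (m + 1) → Matrix (Fin N) (Fin N) ℂ[X])

theorem coeff_Pop_apply (u : Fin N → ℂ⟦X⟧) (b : Fin N) (r : ℕ) :
    PowerSeries.coeff r (Pop A u b) = ∑ i, ∑ c, ∑ p ∈ antidiagonal r,
      (A i b c).coeff p.1 * ((p.2 + 1).ascFactorial i * PowerSeries.coeff (p.2 + i) (u c)) := by
  simp only [Pop, LinearMap.sum_apply, Finset.sum_apply, LinearMap.pi_apply, LinearMap.comp_apply,
    LinearMap.proj_apply, LinearMap.mulLeft_apply, map_sum, PowerSeries.coeff_mul,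
    Module.End.pow_apply, Derivation.coeFn_coe, PowerSeries.coeff_iterate_derivative,
    Polynomial.coeff_coe]

open Classical in
noncomputable def indicialMatrix (n : ℤ) : Matrix (Fin N) (Fin N) ℂ[X] :=
  ∑ j : Fin (m + 1), if A j ≠ 0 ∧ (j : ℤ) - matNu (A j) = n then
    descPochhammer ℂ j • (trailMat (A j)).map Polynomial.C else 0

variable {A} {n : ℤ}

theorem coeff_Pop_apply_eq_zero (hn : ∀ i, A i ≠ 0 → (i : ℤ) - matNu (A i) ≤ n)
    {u : Fin N → ℂ⟦X⟧} {r : ℕ} (hu : ∀ (j : ℕ) c, (j : ℤ) ≤ r + n → PowerSeries.coeff j (u c) = 0)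
    (b : Fin N) :
    PowerSeries.coeff r (Pop A u b) = 0 := by
  rw [coeff_Pop_apply]
  refine sum_eq_zero fun i _ => sum_eq_zero fun c _ => sum_eq_zero fun p hp => ?_
  by_cases h : (A i b c).coeff p.1 = 0
  · rw [h, zero_mul]
  · obtain ⟨hA, hν⟩ := matNu_le_of_coeff_ne_zero h
    have := hn i hA
    have := HasAntidiagonal.mem_antidiagonal.mp hp
    rw [hu _ _ (by omega), mul_zero, mul_zero]

theorem coeff_Pop_apply_monomial (hn : ∀ i, A i ≠ 0 → (i : ℤ) - matNu (A i) ≤ n)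
    {k r : ℕ} (hk : (k : ℤ) = r + n) (hkm : m ≤ k) (x : Fin N → ℂ) (b : Fin N) :
    PowerSeries.coeff r (Pop A (fun c => PowerSeries.monomial k (x c)) b) =
      (Lmat A n k *ᵥ x) b := by
  classical
  rw [coeff_Pop_apply, Lmat, Matrix.sum_mulVec, Finset.sum_apply]
  refine sum_congr rfl fun i _ => ?_
  have hik : (i : ℕ) ≤ k := i.is_le.trans hkm
  simp only [PowerSeries.coeff_monomial]
  -- The only term with `p.2 + i = k` has `p.1 = i - n ≤ ν(A i)`, and `(A i).coeff p.1` vanishes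
  -- unless equality holds, i.e. unless `i ∈ J`.
  split_ifs with hJ
  · rw [Matrix.smul_mulVec, Pi.smul_apply, Matrix.mulVec, dotProduct, smul_eq_mul, mul_sum]
    refine sum_congr rfl fun c _ => ?_
    rw [sum_eq_single_of_mem (matNu (A i), k - i) (HasAntidiagonal.mem_antidiagonal.mpr (by omega))]
    · have hfact : (k - i + 1).ascFactorial i = k.descFactorial i := by
        rw [← Nat.add_descFactorial_eq_ascFactorial, Nat.sub_add_cancel hik]
      dsimp only
      rw [if_pos (by omega), hfact, ← descPochhammer_eval_eq_descFactorial,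
        descPochhammer_eval_eq_prod_range]
      simp only [trailMat]
      ring
    · rintro p hp hne
      have := HasAntidiagonal.mem_antidiagonal.mp hp
      rw [if_neg fun h => hne (Prod.ext (by dsimp only; omega) (by dsimp only; omega)), mul_zero,
        mul_zero]
  · rw [Matrix.zero_mulVec, Pi.zero_apply]
    refine sum_eq_zero fun c _ => sum_eq_zero fun p hp => ?_
    by_cases h : (A i b c).coeff p.1 = 0
    · rw [h, zero_mul]
    · obtain ⟨hA, hν⟩ := matNu_le_of_coeff_ne_zero h
      have := hn i hA
      have := HasAntidiagonal.mem_antidiagonal.mp hp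
      rw [if_neg fun h => hJ ⟨hA, by omega⟩, mul_zero, mul_zero]

theorem eval_det_indicialMatrix (k : ℂ) : (indicialMatrix A n).det.eval k = (Lmat A n k).det := by
  classical
  rw [← coe_evalRingHom, RingHom.map_det]
  congr 1
  ext b c
  rw [RingHom.mapMatrix_apply, Matrix.map_apply, indicialMatrix, Lmat, Matrix.sum_apply,
    Matrix.sum_apply, coe_evalRingHom, eval_finsetSum]
  refine sum_congr rfl fun j _ => ?_
  split_ifs <;> simp [descPochhammer_eval_eq_prod_range]

theorem eventually_det_Lmat_ne_zero (hl : ∃ k : ℂ, (Lmat A n k).det ≠ 0) :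
    ∀ᶠ k : ℕ in Filter.atTop, (Lmat A n k).det ≠ 0 := by
  obtain ⟨k, hk⟩ := hl
  have hdet : (indicialMatrix A n).det ≠ 0 := fun h =>
    hk (by rw [← eval_det_indicialMatrix, h, eval_zero])
  have hroots : ∀ᶠ z : ℂ in Filter.cofinite, (indicialMatrix A n).det.eval z ≠ 0 :=
    (finite_setOfPred_isRoot hdet).eventually_cofinite_notMem
  rw [← Nat.cofinite_eq_atTop]
  exact (Nat.cast_injective.tendsto_cofinite.eventually hroots).mono fun k hk => by
    rwa [← eval_det_indicialMatrix]

end DifferentialOperator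

theorem isTriangular_coeffEquiv_conj_Pop {N m : ℕ}
    {A : Fin (m + 1) → Matrix (Fin N) (Fin N) ℂ[X]} {n : ℤ}
    (hn : ∀ i, A i ≠ 0 → (i : ℤ) - matNu (A i) ≤ n) {k₀ r₀ : ℕ} (hm : m ≤ k₀)
    (hr₀ : (r₀ : ℤ) + n = k₀) :
    IsTriangular ((coeffEquiv ℂ (Fin N)).conj (Pop A)) k₀ r₀ fun k => (Lmat A n k).mulVecLin where
  apply_eq_zero v r hv := funext fun b =>
    coeff_Pop_apply_eq_zero hn (fun j c hj => by simp [coeffEquiv, hv j (by omega)]) b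
  apply_single k hk x := funext fun b => by
    rw [LinearEquiv.conj_apply_apply, coeffEquiv_symm_single]
    exact coeff_Pop_apply_monomial hn (by omega) (hm.trans hk) x b

theorem formal_index_general {N m : ℕ}
    (A : Fin (m + 1) → Matrix (Fin N) (Fin N) (Polynomial ℂ))
    (n : ℤ)
    (hn_ub : ∀ i, A i ≠ 0 → (i : ℤ) - matNu (A i) ≤ n)
    (hl : ∃ k : ℂ, (Lmat A n k).det ≠ 0) :
    FiniteDimensional ℂ (LinearMap.ker (Pop A)) ∧
      FiniteDimensional ℂ ((Fin N → PowerSeries ℂ) ⧸ LinearMap.range (Pop A)) ∧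
      (Module.finrank ℂ (LinearMap.ker (Pop A)) : ℤ) -
          Module.finrank ℂ ((Fin N → PowerSeries ℂ) ⧸ LinearMap.range (Pop A)) =
        N * n := by
  obtain ⟨k₀, hk₀⟩ := Filter.eventually_atTop.mp
    ((eventually_det_Lmat_ne_zero hl).and (Filter.eventually_ge_atTop (max m n.toNat)))
  have hm : m ≤ k₀ := (le_max_left _ _).trans (hk₀ k₀ le_rfl).2
  have hn : n ≤ k₀ := by have := (le_max_right m n.toNat).trans (hk₀ k₀ le_rfl).2; omega
  have hr₀ : ((k₀ - n).toNat : ℤ) + n = k₀ := by omega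
  have hD (k : ℕ) (hk : k₀ ≤ k) : Function.Bijective (Lmat A n k).mulVecLin :=
    have hunit := (Matrix.isUnit_iff_isUnit_det _).mpr (isUnit_iff_ne_zero.mpr (hk₀ k hk).1)
    ⟨Matrix.mulVec_injective_iff_isUnit.mpr hunit, Matrix.mulVec_surjective_iff_isUnit.mpr hunit⟩
  have hχ := ((isTriangular_coeffEquiv_conj_Pop hn_ub hm hr₀).hasIndex hD).of_conj
  rw [finrank_fin_fun] at hχ
  show HasIndex (Pop A) (N * n)
  convert hχ using 1
  linear_combination (N : ℤ) * hr₀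

/-- **Theorem 1(i).** If the indicial polynomial `l(k) = det L(k)` is not identically zero,
then `P : ℂ[[x]]^N → ℂ[[x]]^N` has finite-dimensional kernel and cokernel, and its index
is `χ(P; ℂ[[x]]^N) = dim ker P - dim coker P = N·n`, where
`n = max_{0 ≤ i ≤ m} (i - ν(A_i))`. -/
theorem formal_index {N m : ℕ} (hN : 1 ≤ N)
    (A : Fin (m + 1) → Matrix (Fin N) (Fin N) (Polynomial ℂ))
    (hAm : (A (Fin.last m)).det ≠ 0)
    (n : ℤ)
    (hn_ub : ∀ i, A i ≠ 0 → (i : ℤ) - matNu (A i) ≤ n)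
    (hn_mem : ∃ i, A i ≠ 0 ∧ (i : ℤ) - matNu (A i) = n)
    (hl : ∃ k : ℂ, (Lmat A n k).det ≠ 0) :
    FiniteDimensional ℂ (LinearMap.ker (Pop A)) ∧
      FiniteDimensional ℂ ((Fin N → PowerSeries ℂ) ⧸ LinearMap.range (Pop A)) ∧
      (Module.finrank ℂ (LinearMap.ker (Pop A)) : ℤ) -
          Module.finrank ℂ ((Fin N → PowerSeries ℂ) ⧸ LinearMap.range (Pop A)) =
        N * n :=
  formal_index_general A n hn_ub hl
end

section
/- Let P₂ = x³·I₂·(d/dx) + M₀ where M₀ is the constant 2×2 matrix with rows (0,0) and (1,0) and I₂ is the 2×2 identity matrix. If v ∈ ℂ[[x]]² satisfies P₂v = g where g ∈ ℂ[[x]]² is convergent, then v is convergent; that is, P₂ is singular regular at 0. -/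
open PowerSeries

noncomputable section

/-- The operator `P₂ = x³·I₂·(d/dx) + M₀`, `M₀ = !![0,0;1,0]`, acting on `ℂ[[x]]²`. -/
def P2 (v : Fin 2 → PowerSeries ℂ) : Fin 2 → PowerSeries ℂ := fun b =>
  PowerSeries.X ^ 3 * PowerSeries.derivativeFun (v b) +
    ∑ c : Fin 2, PowerSeries.C ((!![0, 0; 1, 0] : Matrix (Fin 2) (Fin 2) ℂ) b c) * v c

end

/-!
`M₀` is strictly lower triangular, so `P₂ v = g` decouples into
`x³ v₀' = g₀` and `x³ v₁' = g₁ - v₀`. It therefore suffices that `x³ f'` convergent implies `f`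
convergent: dividing by `x³` only shifts coefficients, and the coefficients of `f` are those of
`f'` divided by `n + 1 ≥ 1`, so integration keeps the radius of convergence.
-/

lemma summable_norm_coeff_mul_pow_of_le {f : ℂ⟦X⟧} {r s : ℝ} (hs : 0 ≤ s) (hsr : s ≤ r)
    (hf : Summable fun j : ℕ => ‖coeff j f‖ * r ^ j) :
    Summable fun j : ℕ => ‖coeff j f‖ * s ^ j :=
  hf.of_nonneg_of_le (fun j => by positivity)
    (fun j => mul_le_mul_of_nonneg_left (pow_le_pow_left₀ hs hsr j) (norm_nonneg _))

namespace PSConvergent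

variable {f g : ℂ⟦X⟧}

lemma sub (hf : PSConvergent f) (hg : PSConvergent g) : PSConvergent (f - g) := by
  obtain ⟨r, hr, hfr⟩ := hf
  obtain ⟨r', hr', hgr'⟩ := hg
  have hs : 0 < min r r' := lt_min hr hr'
  refine ⟨min r r', hs, ?_⟩
  refine ((summable_norm_coeff_mul_pow_of_le hs.le (min_le_left _ _) hfr).add
    (summable_norm_coeff_mul_pow_of_le hs.le (min_le_right _ _) hgr')).of_nonneg_of_le
    (fun j => by positivity) (fun j => ?_)
  rw [← add_mul, map_sub]
  exact mul_le_mul_of_nonneg_right (norm_sub_le _ _) (by positivity)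

lemma of_X_pow_mul (k : ℕ) (hf : PSConvergent (X ^ k * f)) : PSConvergent f := by
  obtain ⟨r, hr, hfr⟩ := hf
  refine ⟨r, hr, ?_⟩
  refine (((summable_nat_add_iff k).mpr hfr).mul_left (r ^ k)⁻¹).congr fun j => ?_
  rw [coeff_X_pow_mul, pow_add]
  field_simp

lemma of_derivative (hf : PSConvergent (d⁄dX ℂ f)) : PSConvergent f := by
  obtain ⟨r, hr, hfr⟩ := hf
  set s := min r 1
  have hs : 0 < s := lt_min hr one_pos
  refine ⟨s, hs, (summable_nat_add_iff 1).mp ?_⟩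
  refine (summable_norm_coeff_mul_pow_of_le hs.le (min_le_left _ _) hfr).of_nonneg_of_le
    (fun j => by positivity) (fun j => ?_)
  have hcoeff : ‖coeff (j + 1) f‖ ≤ ‖coeff j (d⁄dX ℂ f)‖ := by
    rw [coeff_derivative, norm_mul]
    refine le_mul_of_one_le_right (norm_nonneg _) ?_
    rw [← Nat.cast_succ, Complex.norm_natCast]
    exact_mod_cast j.succ_pos
  have hpow : s ^ (j + 1) ≤ s ^ j := pow_le_pow_of_le_one hs.le (min_le_right _ _) j.le_succ
  exact mul_le_mul hcoeff hpow (by positivity) (norm_nonneg _)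

lemma of_X_pow_mul_derivative (k : ℕ) (hf : PSConvergent (X ^ k * d⁄dX ℂ f)) :
    PSConvergent f :=
  (hf.of_X_pow_mul k).of_derivative

end PSConvergent

lemma P2_apply_zero (v : Fin 2 → ℂ⟦X⟧) : P2 v 0 = X ^ 3 * d⁄dX ℂ (v 0) := by
  simp [P2, Fin.sum_univ_two, derivativeFun]

lemma P2_apply_one (v : Fin 2 → ℂ⟦X⟧) : P2 v 1 = X ^ 3 * d⁄dX ℂ (v 1) + v 0 := by
  simp [P2, Fin.sum_univ_two, derivativeFun]

/-- If `v ∈ ℂ[[x]]²` satisfies `P₂v = g` with `g` convergent, then `v` is convergent: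
`P₂` is singular regular at `0`. -/
theorem P2_singular_regular (v g : Fin 2 → PowerSeries ℂ)
    (hvg : P2 v = g) (hg : ∀ b, PSConvergent (g b)) :
    ∀ b, PSConvergent (v b) := by
  have hv0 : PSConvergent (v 0) := by
    have h : X ^ 3 * d⁄dX ℂ (v 0) = g 0 := by rw [← hvg, P2_apply_zero]
    exact PSConvergent.of_X_pow_mul_derivative 3 (h ▸ hg 0)
  have hv1 : PSConvergent (v 1) := by
    have h : X ^ 3 * d⁄dX ℂ (v 1) = g 1 - v 0 := by rw [← hvg, P2_apply_one, add_sub_cancel_right]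
    exact PSConvergent.of_X_pow_mul_derivative 3 (h ▸ (hg 1).sub hv0)
  intro b
  fin_cases b
  exacts [hv0, hv1]
end

section
/- Assume l(k) and d(k) are both not identically zero as polynomials in k. Then the ℂ-linear map P : ℂ[x]^N → ℂ[x]^N has finite-dimensional kernel and cokernel over ℂ, and its index equals N·n', i.e. χ(P; ℂ[x]^N) = dim ker P − dim coker P = N·min_{0≤i≤m}(i − d°A_i). -/
open Polynomial PowerSeries

noncomputable section

/-- `d°A`: the maximum over the entries of a polynomial matrix of their degrees
(as a natural number; meaningful for `A ≠ 0`). -/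
def matDeg {N : ℕ} (A : Matrix (Fin N) (Fin N) (Polynomial ℂ)) : ℕ :=
  Finset.univ.sup fun p : Fin N × Fin N => (A p.1 p.2).natDegree

/-- The coefficient matrix `A^{d°A}` of `x^{d°A}` in `A`. -/
def leadMat {N : ℕ} (A : Matrix (Fin N) (Fin N) (Polynomial ℂ)) : Matrix (Fin N) (Fin N) ℂ :=
  fun i j => (A i j).coeff (matDeg A)

open Classical in
/-- The matrix `D(k) = Σ_{j ∈ J'} k(k-1)⋯(k-j+1) A_j^{d_j}`, where
`J' = {j : A_j ≠ 0 ∧ j - d°(A_j) = n'}`. -/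
def Dmat {N m : ℕ} (A : Fin (m + 1) → Matrix (Fin N) (Fin N) (Polynomial ℂ)) (n' : ℤ)
    (k : ℂ) : Matrix (Fin N) (Fin N) ℂ :=
  ∑ j : Fin (m + 1),
    if A j ≠ 0 ∧ (j : ℤ) - matDeg (A j) = n' then
      (∏ t ∈ Finset.range (j : ℕ), (k - t)) • leadMat (A j)
    else 0

/-- The differential operator `P = Σ_{i=0}^m A_i(x) (d/dx)^i` acting ℂ-linearly on
`ℂ[x]^N`. -/
def PopPoly {N m : ℕ} (A : Fin (m + 1) → Matrix (Fin N) (Fin N) (Polynomial ℂ)) :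
    Module.End ℂ (Fin N → Polynomial ℂ) :=
  ∑ i : Fin (m + 1),
    LinearMap.pi fun b : Fin N =>
      ∑ c : Fin N,
        (LinearMap.mulLeft ℂ (A i b c) ∘ₗ
            ((Polynomial.derivative : Module.End ℂ (Polynomial ℂ)) ^ (i : ℕ))) ∘ₗ
          LinearMap.proj c

end

/-!
Let `W s ⊆ ℂ[x]^N` consist of the vectors of polynomials of degree `< s`, so that
`dim W s = N s`. Because `i - d°A_i ≥ n'`, we have `deg (P u) ≤ deg u - n'`, and for `u` of
degree `≤ s` the coefficient of `x^(s - n')` in `P u` is `D(s)` applied to the coefficient of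
`x^s` in `u`. Since `d` is a nonzero polynomial, `D(s)` is invertible for all large `s`; for
such `k = r + n'` this gives `P⁻¹(W (r + 1)) = W (k + 1)` and `range P + W (r + 1) = ℂ[x]^N`.
Hence `P` has the same kernel and cokernel as its restriction `W (k + 1) → W (r + 1)`, whose
index is `N (k + 1) - N (r + 1) = N n'`.
-/

open Module Matrix

namespace LinearMap

variable {K V W : Type*} [DivisionRing K] [AddCommGroup V] [Module K V] [AddCommGroup W]
  [Module K W]

theorem index_eq_of_comap_eq (f : V →ₗ[K] W) {S : Submodule K V} {T : Submodule K W}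
    [FiniteDimensional K S] [FiniteDimensional K T] (hST : T.comap f = S)
    (hT : range f ⊔ T = ⊤) :
    FiniteDimensional K (ker f) ∧ FiniteDimensional K (W ⧸ range f) ∧
      f.index = finrank K S - finrank K T := by
  have hmaps : ∀ x ∈ S, f x ∈ T := fun x hx => hST.ge hx
  have hker : ker f ≤ S := hST ▸ Submodule.comap_mono bot_le
  let g : T →ₗ[K] W ⧸ range f := (range f).mkQ ∘ₗ T.subtype
  have hg : Function.Surjective g := by
    rw [← range_eq_top, range_comp, Submodule.range_subtype, Submodule.map_mkQ_eq_top, hT]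
  have hkerg : ker g = range (f.restrict hmaps) := by
    rw [ker_comp, Submodule.ker_mkQ, range_restrict, ← hST, Submodule.map_comap_eq]
    ext x
    simp
  let eker : ker (f.restrict hmaps) ≃ₗ[K] ker f :=
    (LinearEquiv.ofEq _ _ (ker_restrict hmaps)).trans (Submodule.comapSubtypeEquivOfLe hker)
  let ecoker : (T ⧸ range (f.restrict hmaps)) ≃ₗ[K] W ⧸ range f :=
    (Submodule.quotEquivOfEq _ _ hkerg.symm).trans (g.quotKerEquivOfSurjective hg)
  refine ⟨.of_injective _ eker.symm.injective, .of_surjective _ ecoker.surjective, ?_⟩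
  rw [← index_eq_of_finiteDimensional (f := f.restrict hmaps), index_eq_finrank_sub,
    index_eq_finrank_sub, eker.finrank_eq, ecoker.finrank_eq]

end LinearMap

def Submodule.piUnivEquiv {R ι : Type*} {φ : ι → Type*} [Semiring R] [∀ i, AddCommMonoid (φ i)]
    [∀ i, Module R (φ i)] (p : ∀ i, Submodule R (φ i)) :
    Submodule.pi Set.univ p ≃ₗ[R] ∀ i, p i where
  toFun u i := ⟨u.1 i, u.2 i (Set.mem_univ i)⟩
  invFun v := ⟨fun i => v i, fun i _ => (v i).2⟩
  map_add' _ _ := rfl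
  map_smul' _ _ := rfl
  left_inv _ := rfl
  right_inv _ := rfl

namespace Polynomial

section degreeLTPi

variable (ι R : Type*)

noncomputable def degreeLTPi [Semiring R] (s : ℕ) : Submodule R (ι → R[X]) :=
  Submodule.pi Set.univ fun _ => degreeLT R s

variable {ι R}

theorem mem_degreeLTPi [Semiring R] {s : ℕ} {u : ι → R[X]} :
    u ∈ degreeLTPi ι R s ↔ ∀ i m, s ≤ m → (u i).coeff m = 0 := by
  simp only [degreeLTPi, Submodule.mem_pi, Set.mem_univ, forall_const, mem_degreeLT,
    degree_lt_iff_coeff_zero]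

theorem mem_degreeLTPi_succ [Semiring R] {s : ℕ} {u : ι → R[X]} :
    u ∈ degreeLTPi ι R (s + 1) ↔ ∀ i, (u i).natDegree ≤ s := by
  simp only [mem_degreeLTPi, natDegree_le_iff_coeff_eq_zero, Nat.succ_le_iff]

theorem degreeLTPi_mono [Semiring R] {s t : ℕ} (h : s ≤ t) :
    degreeLTPi ι R s ≤ degreeLTPi ι R t := fun _ hu =>
  mem_degreeLTPi.2 fun i m hm => mem_degreeLTPi.1 hu i m (h.trans hm)

theorem exists_mem_degreeLTPi [Fintype ι] [Semiring R] (u : ι → R[X]) :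
    ∃ s, u ∈ degreeLTPi ι R s :=
  ⟨Finset.univ.sup (fun i => (u i).natDegree) + 1, mem_degreeLTPi_succ.2 fun i =>
    Finset.le_sup (f := fun i => (u i).natDegree) (Finset.mem_univ i)⟩

instance [Finite ι] [Field R] (s : ℕ) : FiniteDimensional R (degreeLTPi ι R s) :=
  .of_injective _ (Submodule.piUnivEquiv _).injective

theorem finrank_degreeLTPi [Fintype ι] [Field R] (s : ℕ) :
    finrank R (degreeLTPi ι R s) = Fintype.card ι * s := by
  rw [degreeLTPi, (Submodule.piUnivEquiv _).finrank_eq, finrank_pi_fintype]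
  simp [(degreeLTEquiv R s).finrank_eq]

end degreeLTPi

theorem coeff_mul_iterate_derivative_of_natDegree_le {R : Type*} [Semiring R] {a p : R[X]}
    {d s i t : ℕ} (ha : a.natDegree ≤ d) (hp : p.natDegree ≤ s) (h : s + d ≤ t + i) :
    (a * derivative^[i] p).coeff t =
      if t + i = s + d then a.coeff d * (s.descFactorial i • p.coeff s) else 0 := by
  by_cases his : i ≤ s
  · have hq : (derivative^[i] p).natDegree ≤ s - i :=
      (natDegree_iterate_derivative p i).trans (Nat.sub_le_sub_right hp i)
    split_ifs with hti
    · rw [show t = d + (s - i) by omega, coeff_mul_add_eq_of_natDegree_le ha hq,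
        coeff_iterate_derivative, Nat.sub_add_cancel his]
    · exact coeff_eq_zero_of_natDegree_lt (natDegree_mul_le.trans_lt (by omega))
  · rw [iterate_derivative_eq_zero (by omega), mul_zero, coeff_zero,
      Nat.descFactorial_eq_zero_iff_lt.2 (by omega), zero_smul, mul_zero, ite_self]

theorem eventually_eval_natCast_ne_zero {R : Type*} [CommRing R] [IsDomain R] [CharZero R]
    {p : R[X]} (hp : p ≠ 0) : ∀ᶠ s : ℕ in Filter.atTop, p.eval (s : R) ≠ 0 := by
  rw [← Nat.cofinite_eq_atTop]
  exact ((finite_setOfPred_isRoot hp).preimage Nat.cast_injective.injOn).compl_mem_cofinite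

end Polynomial

section PopPoly

variable {N m : ℕ} (A : Fin (m + 1) → Matrix (Fin N) (Fin N) ℂ[X]) {n' : ℤ}

theorem natDegree_le_matDeg (M : Matrix (Fin N) (Fin N) ℂ[X]) (b c : Fin N) :
    (M b c).natDegree ≤ matDeg M :=
  Finset.le_sup (f := fun p : Fin N × Fin N => (M p.1 p.2).natDegree) (Finset.mem_univ (b, c))

theorem popPoly_apply (u : Fin N → ℂ[X]) (b : Fin N) :
    PopPoly A u b = ∑ i : Fin (m + 1), ∑ c, A i b c * Polynomial.derivative^[i] (u c) := by
  simp [PopPoly, LinearMap.sum_apply, Finset.sum_apply, Module.End.pow_apply]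

open Classical in
theorem dmat_natCast_apply (s : ℕ) (b c : Fin N) :
    Dmat A n' s b c = ∑ j : Fin (m + 1),
      if A j ≠ 0 ∧ (j : ℤ) - matDeg (A j) = n' then (s.descFactorial j : ℂ) * leadMat (A j) b c
      else 0 := by
  simp only [Dmat, Matrix.sum_apply, ← descPochhammer_eval_eq_prod_range,
    descPochhammer_eval_eq_descFactorial]
  refine Finset.sum_congr rfl fun j _ => ?_
  split_ifs <;> rfl

variable {A}

theorem coeff_popPoly_apply (hA : ∀ i, A i ≠ 0 → n' ≤ (i : ℤ) - matDeg (A i))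
    {u : Fin N → ℂ[X]} {s t : ℕ} (hu : u ∈ degreeLTPi (Fin N) ℂ (s + 1))
    (hst : (s : ℤ) ≤ t + n') (b : Fin N) :
    (PopPoly A u b).coeff t =
      if (s : ℤ) = t + n' then (Dmat A n' s *ᵥ fun c => (u c).coeff s) b else 0 := by
  classical
  rw [mem_degreeLTPi_succ] at hu
  have hterm : ∀ i c, (A i b c * Polynomial.derivative^[i] (u c)).coeff t =
      if (s : ℤ) = t + n' then
        (if A i ≠ 0 ∧ (i : ℤ) - matDeg (A i) = n' then
          (s.descFactorial i : ℂ) * leadMat (A i) b c else 0) * (u c).coeff s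
      else 0 := by
    intro i c
    by_cases hAi : A i = 0
    · simp [hAi]
    have := hA i hAi
    rw [coeff_mul_iterate_derivative_of_natDegree_le (natDegree_le_matDeg _ b c) (hu c)
      (by omega)]
    by_cases hs : (s : ℤ) = t + n'
    · by_cases hJ : (i : ℤ) - matDeg (A i) = n'
      · rw [if_pos (by omega), if_pos hs, if_pos ⟨hAi, hJ⟩, nsmul_eq_mul, leadMat]
        ring
      · rw [if_neg (by omega), if_pos hs, if_neg (by tauto), zero_mul]
    · rw [if_neg (by omega), if_neg hs]
  simp only [popPoly_apply, finsetSum_coeff, hterm]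
  split_ifs
  · simp only [Matrix.mulVec, dotProduct, dmat_natCast_apply, Finset.sum_mul]
    exact Finset.sum_comm
  · simp

theorem popPoly_mem_degreeLTPi (hA : ∀ i, A i ≠ 0 → n' ≤ (i : ℤ) - matDeg (A i))
    {u : Fin N → ℂ[X]} {s t : ℕ} (hst : (s : ℤ) = t + n')
    (hu : u ∈ degreeLTPi (Fin N) ℂ (s + 1)) : PopPoly A u ∈ degreeLTPi (Fin N) ℂ (t + 1) :=
  mem_degreeLTPi.2 fun b j hj => by
    rw [coeff_popPoly_apply hA hu (by omega), if_neg (by omega)]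

theorem mem_degreeLTPi_of_coeff_popPoly_apply_eq_zero
    (hA : ∀ i, A i ≠ 0 → n' ≤ (i : ℤ) - matDeg (A i)) {u : Fin N → ℂ[X]} {s t : ℕ}
    (hD : (Dmat A n' s).det ≠ 0) (hst : (s : ℤ) = t + n')
    (hu : u ∈ degreeLTPi (Fin N) ℂ (s + 1)) (hPu : ∀ b, (PopPoly A u b).coeff t = 0) :
    u ∈ degreeLTPi (Fin N) ℂ s := by
  have htop : (fun c => (u c).coeff s) = 0 := by
    refine Matrix.eq_zero_of_mulVec_eq_zero hD (funext fun b => ?_)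
    rw [Pi.zero_apply, ← hPu b, coeff_popPoly_apply hA hu hst.le, if_pos hst]
  refine mem_degreeLTPi.2 fun c j hj => ?_
  rcases hj.eq_or_lt with rfl | hj
  · exact congrFun htop c
  · exact mem_degreeLTPi.1 hu c j hj

theorem exists_sub_popPoly_mem_degreeLTPi
    (hA : ∀ i, A i ≠ 0 → n' ≤ (i : ℤ) - matDeg (A i)) {w : Fin N → ℂ[X]} {s t : ℕ}
    (hD : (Dmat A n' s).det ≠ 0) (hst : (s : ℤ) = t + n')
    (hw : w ∈ degreeLTPi (Fin N) ℂ (t + 1)) :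
    ∃ u, w - PopPoly A u ∈ degreeLTPi (Fin N) ℂ t := by
  set y := (Dmat A n' s)⁻¹ *ᵥ fun c => (w c).coeff t
  set u : Fin N → ℂ[X] := fun c => monomial s (y c)
  have hu : u ∈ degreeLTPi (Fin N) ℂ (s + 1) :=
    mem_degreeLTPi_succ.2 fun c => natDegree_monomial_le _
  have hPu := popPoly_mem_degreeLTPi hA hst hu
  refine ⟨u, mem_degreeLTPi.2 fun b j hj => ?_⟩
  rcases hj.eq_or_lt with rfl | hj
  · rw [Pi.sub_apply, coeff_sub, coeff_popPoly_apply hA hu hst.le, if_pos hst]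
    simp [u, y, mulVec_mulVec, mul_nonsing_inv _ (isUnit_iff_ne_zero.2 hD)]
  · rw [Pi.sub_apply, coeff_sub, mem_degreeLTPi.1 hw b j hj, mem_degreeLTPi.1 hPu b j hj,
      sub_zero]

theorem comap_popPoly_degreeLTPi (hA : ∀ i, A i ≠ 0 → n' ≤ (i : ℤ) - matDeg (A i))
    {k r : ℕ} (hD : ∀ s, k ≤ s → (Dmat A n' s).det ≠ 0) (hkr : (k : ℤ) = r + n') :
    (degreeLTPi (Fin N) ℂ (r + 1)).comap (PopPoly A) = degreeLTPi (Fin N) ℂ (k + 1) := by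
  refine le_antisymm (fun u hPu => ?_) fun u hu => popPoly_mem_degreeLTPi hA hkr hu
  have hdown : ∀ d, u ∈ degreeLTPi (Fin N) ℂ (k + 1 + d) → u ∈ degreeLTPi (Fin N) ℂ (k + 1) := by
    intro d
    induction d with
    | zero => exact id
    | succ d ih =>
      refine fun hu => ih (mem_degreeLTPi_of_coeff_popPoly_apply_eq_zero hA
        (t := r + 1 + d) (hD _ (by omega)) (by push_cast; omega) hu fun b => ?_)
      exact mem_degreeLTPi.1 hPu b _ (by omega)
  obtain ⟨d, hd⟩ := exists_mem_degreeLTPi u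
  exact hdown d (degreeLTPi_mono (by omega) hd)

theorem range_popPoly_sup_degreeLTPi (hA : ∀ i, A i ≠ 0 → n' ≤ (i : ℤ) - matDeg (A i))
    {k r : ℕ} (hD : ∀ s, k ≤ s → (Dmat A n' s).det ≠ 0) (hkr : (k : ℤ) = r + n') :
    LinearMap.range (PopPoly A) ⊔ degreeLTPi (Fin N) ℂ (r + 1) = ⊤ := by
  have hup : ∀ d, degreeLTPi (Fin N) ℂ (r + 1 + d) ≤
      LinearMap.range (PopPoly A) ⊔ degreeLTPi (Fin N) ℂ (r + 1) := by
    intro d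
    induction d with
    | zero => exact le_sup_right
    | succ d ih =>
      intro w hw
      obtain ⟨u, hu⟩ := exists_sub_popPoly_mem_degreeLTPi hA (s := k + 1 + d) (t := r + 1 + d)
        (hD _ (by omega)) (by push_cast; omega) hw
      simpa using Submodule.add_mem _ (ih hu) (Submodule.mem_sup_left ⟨u, rfl⟩)
  refine eq_top_iff.2 fun w _ => ?_
  obtain ⟨d, hd⟩ := exists_mem_degreeLTPi w
  exact hup d (degreeLTPi_mono (by omega) hd)

theorem eventually_det_dmat_ne_zero (hd : ∃ k : ℂ, (Dmat A n' k).det ≠ 0) :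
    ∀ᶠ s : ℕ in Filter.atTop, (Dmat A n' s).det ≠ 0 := by
  classical
  let M : Matrix (Fin N) (Fin N) ℂ[X] := ∑ j : Fin (m + 1),
    if A j ≠ 0 ∧ (j : ℤ) - matDeg (A j) = n' then
      descPochhammer ℂ j • (leadMat (A j)).map Polynomial.C
    else 0
  have hM : ∀ k, (Dmat A n' k).det = M.det.eval k := by
    intro k
    rw [← coe_evalRingHom, RingHom.map_det]
    congr 1
    ext b c
    simp only [RingHom.mapMatrix_apply, Matrix.map_apply, coe_evalRingHom, Dmat, M,
      Matrix.sum_apply, eval_finsetSum]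
    refine Finset.sum_congr rfl fun j _ => ?_
    split_ifs
    · simp [descPochhammer_eval_eq_prod_range]
    · simp
  obtain ⟨k, hk⟩ := hd
  simpa only [hM] using eventually_eval_natCast_ne_zero fun h => hk (by rw [hM, h, eval_zero])

end PopPoly

theorem polynomial_index_general {N m : ℕ}
    (A : Fin (m + 1) → Matrix (Fin N) (Fin N) (Polynomial ℂ))
    (n' : ℤ)
    (hn'_lb : ∀ i, A i ≠ 0 → n' ≤ (i : ℤ) - matDeg (A i))
    (hd : ∃ k : ℂ, (Dmat A n' k).det ≠ 0) :
    FiniteDimensional ℂ (LinearMap.ker (PopPoly A)) ∧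
      FiniteDimensional ℂ ((Fin N → Polynomial ℂ) ⧸ LinearMap.range (PopPoly A)) ∧
      (Module.finrank ℂ (LinearMap.ker (PopPoly A)) : ℤ) -
          Module.finrank ℂ ((Fin N → Polynomial ℂ) ⧸ LinearMap.range (PopPoly A)) =
        N * n' := by
  obtain ⟨k₀, hk₀⟩ := Filter.eventually_atTop.1 (eventually_det_dmat_ne_zero hd)
  set k := max k₀ n'.toNat
  obtain ⟨r, hkr⟩ : ∃ r : ℕ, (k : ℤ) = r + n' := ⟨(k - n').toNat, by omega⟩
  have hD : ∀ s, k ≤ s → (Dmat A n' s).det ≠ 0 := fun s hs => hk₀ s (le_of_max_le_left hs)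
  obtain ⟨hker, hcoker, hindex⟩ := (PopPoly A).index_eq_of_comap_eq
    (comap_popPoly_degreeLTPi hn'_lb hD hkr) (range_popPoly_sup_degreeLTPi hn'_lb hD hkr)
  refine ⟨hker, hcoker, ?_⟩
  rw [← LinearMap.index_eq_finrank_sub, hindex, finrank_degreeLTPi, finrank_degreeLTPi,
    Fintype.card_fin]
  push_cast
  linear_combination (N : ℤ) * hkr

/-- **Theorem 3.** If `l(k)` and `d(k)` are not identically zero, then
`P : ℂ[x]^N → ℂ[x]^N` has finite-dimensional kernel and cokernel, and its index is
`χ(P; ℂ[x]^N) = N·n' = N·min_{0 ≤ i ≤ m}(i - d°A_i)`. -/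
theorem polynomial_index {N m : ℕ} (hN : 1 ≤ N)
    (A : Fin (m + 1) → Matrix (Fin N) (Fin N) (Polynomial ℂ))
    (hAm : (A (Fin.last m)).det ≠ 0)
    (n n' : ℤ)
    (hn_ub : ∀ i, A i ≠ 0 → (i : ℤ) - matNu (A i) ≤ n)
    (hn_mem : ∃ i, A i ≠ 0 ∧ (i : ℤ) - matNu (A i) = n)
    (hn'_lb : ∀ i, A i ≠ 0 → n' ≤ (i : ℤ) - matDeg (A i))
    (hn'_mem : ∃ i, A i ≠ 0 ∧ (i : ℤ) - matDeg (A i) = n')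
    (hl : ∃ k : ℂ, (Lmat A n k).det ≠ 0)
    (hd : ∃ k : ℂ, (Dmat A n' k).det ≠ 0) :
    FiniteDimensional ℂ (LinearMap.ker (PopPoly A)) ∧
      FiniteDimensional ℂ ((Fin N → Polynomial ℂ) ⧸ LinearMap.range (PopPoly A)) ∧
      (Module.finrank ℂ (LinearMap.ker (PopPoly A)) : ℤ) -
          Module.finrank ℂ ((Fin N → Polynomial ℂ) ⧸ LinearMap.range (PopPoly A)) =
        N * n' :=
  polynomial_index_general A n' hn'_lb hd
end

section
/- Assume that every point z ∈ Z = {x ∈ ℂ : c₁(x) = 0} is a regular singular point of P in the growth sense, i.e. for every open sector S with vertex z and every holomorphic M_N(ℂ)-valued solution W of A₂W″ + A₁W′ + A₀W = 0 on S there exists β ∈ ℕ with (x−z)^β·W(x) → 0 as x → z within S. Then every solution Y of the Riccati equation Y′ = A(x) + B(x)Y + Y C(x) Y that is holomorphic (single-valued) on ℂ∖Z extends to a matrix of meromorphic functions on all of ℂ. -/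
open Polynomial

noncomputable section

/-- `A₂(x) = c₁(x)·I_N` where `c₁ = det C`. -/
def RicA2 {N : ℕ} (C : Matrix (Fin N) (Fin N) (Polynomial ℂ)) :
    Matrix (Fin N) (Fin N) (Polynomial ℂ) :=
  C.det • (1 : Matrix (Fin N) (Fin N) (Polynomial ℂ))

/-- `A₁(x) = -(C(x)B(x)C₀(x) + C′(x)C₀(x))` where `C₀` is the adjugate of `C`. -/
def RicA1 {N : ℕ} (B C : Matrix (Fin N) (Fin N) (Polynomial ℂ)) :
    Matrix (Fin N) (Fin N) (Polynomial ℂ) :=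
  -(C * B * C.adjugate + (C.map fun p => derivative p) * C.adjugate)

/-- `A₀(x) = c₁(x)·C(x)·A(x)` where `c₁ = det C`. -/
def RicA0 {N : ℕ} (A C : Matrix (Fin N) (Fin N) (Polynomial ℂ)) :
    Matrix (Fin N) (Fin N) (Polynomial ℂ) :=
  C.det • (C * A)

end

noncomputable section

/-- The open sector with vertex `z`, opening angles `(θ₁, θ₂)` and radius `r`. -/
def Sector (z : ℂ) (θ₁ θ₂ r : ℝ) : Set ℂ :=
  {w | ∃ ρ θ : ℝ, 0 < ρ ∧ ρ < r ∧ θ₁ < θ ∧ θ < θ₂ ∧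
    w = z + ρ * Complex.exp (θ * Complex.I)}

/-- Entrywise derivative of a matrix-valued function. -/
def matDeriv {N : ℕ} (W : ℂ → Matrix (Fin N) (Fin N) ℂ) : ℂ → Matrix (Fin N) (Fin N) ℂ :=
  fun x => Matrix.of fun i j => deriv (fun t => W t i j) x

/-- `W` is a holomorphic solution of `A₂W″ + A₁W′ + A₀W = 0` on the set `S`. -/
def IsSolOn {N : ℕ} (A₂ A₁ A₀ : Matrix (Fin N) (Fin N) (Polynomial ℂ))
    (W : ℂ → Matrix (Fin N) (Fin N) ℂ) (S : Set ℂ) : Prop :=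
  (∀ i j, DifferentiableOn ℂ (fun x => W x i j) S) ∧
    ∀ x ∈ S,
      (A₂.map fun p => p.eval x) * matDeriv (matDeriv W) x +
        (A₁.map fun p => p.eval x) * matDeriv W x +
        (A₀.map fun p => p.eval x) * W x = 0

/-- Every point `z ∈ Z = {c₁ = 0}` is a regular singular point of
`P = A₂(d/dx)² + A₁(d/dx) + A₀` in the growth sense: on every sector with vertex `z`,
every holomorphic solution `W` of `A₂W″ + A₁W′ + A₀W = 0` satisfies
`(x-z)^β·W(x) → 0` as `x → z` in the sector, for some `β ∈ ℕ`. -/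
def RegularSingular {N : ℕ} (A₂ A₁ A₀ : Matrix (Fin N) (Fin N) (Polynomial ℂ))
    (c₁ : Polynomial ℂ) : Prop :=
  ∀ z : ℂ, c₁.eval z = 0 → ∀ θ₁ θ₂ r : ℝ, θ₁ < θ₂ → 0 < r →
    ∀ W : ℂ → Matrix (Fin N) (Fin N) ℂ, IsSolOn A₂ A₁ A₀ W (Sector z θ₁ θ₂ r) →
      ∃ β : ℕ, ∀ i j, Filter.Tendsto (fun x => (x - z) ^ β * W x i j)
        (nhdsWithin z (Sector z θ₁ θ₂ r)) (nhds 0)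

end

/-!
Because `A`, `B`, `C` are polynomials, the linear system `W' = -C U`, `U' = A W + B U` has
entire solutions: the Picard iterates are polynomial and the `n`-th correction is bounded by a
multiple of `(K |x - a|)ⁿ / n!` on every disc. Normalise `W a = 1`, `U a = Y a` at a point
`a ∉ Z`. The defect `D = U - Y W` satisfies the linear equation `D' = (B + Y C) D` and vanishes
at `a`, hence near `a` by Gronwall and on the connected set `ℂ ∖ Z` by the identity theorem.
So `Y = U W⁻¹` on `ℂ ∖ Z`, and `U W⁻¹` is meromorphic on `ℂ` since `det W` is entire and
`det W a = 1`.
-/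

open Polynomial Matrix Set Filter Metric Topology
open scoped Nat

attribute [local instance] Matrix.linftyOpNormedAddCommGroup Matrix.linftyOpNormedSpace
  Matrix.linftyOpNormedRing Matrix.linftyOpNormedAlgebra

theorem hasDerivAt_matrix_iff {𝕜 : Type*} [NontriviallyNormedField 𝕜] {m n : Type*} [Fintype n]
    {Φ : 𝕜 → Matrix m n 𝕜} {Φ' : Matrix m n 𝕜} {x : 𝕜} :
    HasDerivAt Φ Φ' x ↔ ∀ i j, HasDerivAt (fun y => Φ y i j) (Φ' i j) x :=
  hasDerivAt_pi.trans (forall_congr' fun _ => hasDerivAt_pi)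

namespace Polynomial

variable {K : Type*} [Field K]

noncomputable def antiderivFrom (a : K) (p : K[X]) : K[X] :=
  let q := p.sum fun k c => C (c / (k + 1)) * X ^ (k + 1)
  q - C (q.eval a)

@[simp]
theorem derivative_antiderivFrom [CharZero K] (a : K) (p : K[X]) :
    derivative (antiderivFrom a p) = p := by
  conv_rhs => rw [← p.sum_C_mul_X_pow_eq]
  simp only [antiderivFrom, derivative_sub, derivative_C, sub_zero, Polynomial.sum, derivative_sum,
    derivative_C_mul_X_pow, Nat.add_sub_cancel]
  refine Finset.sum_congr rfl fun k _ => ?_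
  rw [Nat.cast_add_one, div_mul_cancel₀ _ (Nat.cast_add_one_ne_zero k)]

@[simp]
theorem eval_antiderivFrom_self (a : K) (p : K[X]) : (antiderivFrom a p).eval a = 0 := by
  simp [antiderivFrom]

end Polynomial

section Segment

variable {E : Type*} [NormedAddCommGroup E] [NormedSpace ℂ E]

theorem hasDerivAt_comp_segment {f : ℂ → E} {f' : E} {a x : ℂ} {t : ℝ}
    (hf : HasDerivAt f f' (a + t * (x - a))) :
    HasDerivAt (fun s : ℝ => f (a + s * (x - a))) ((x - a) • f') t := by
  have hseg : HasDerivAt (fun s : ℝ => a + s * (x - a)) (x - a) t := by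
    simpa using (Complex.ofRealCLM.hasDerivAt.mul_const (x - a)).const_add a
  simpa [Function.comp_def] using (hf.hasFDerivAt.restrictScalars ℝ).comp_hasDerivAt t hseg

theorem norm_segment_sub {a x : ℂ} {t : ℝ} (ht : 0 ≤ t) :
    ‖a + t * (x - a) - a‖ = t * ‖x - a‖ := by
  rw [add_sub_cancel_left, norm_mul, Complex.norm_real, Real.norm_of_nonneg ht]

theorem segment_mem_closedBall {a x : ℂ} {r t : ℝ} (hx : x ∈ closedBall a r)
    (ht : t ∈ Icc (0 : ℝ) 1) :
    a + t * (x - a) ∈ closedBall a r := by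
  rw [mem_closedBall, dist_eq_norm, norm_segment_sub ht.1]
  rw [mem_closedBall, dist_eq_norm] at hx
  nlinarith [norm_nonneg (x - a), ht.2]

theorem norm_le_of_norm_deriv_le_pow_div_factorial {f f' : ℂ → E} {a x : ℂ} {r c : ℝ} {n : ℕ}
    (hf : ∀ y ∈ closedBall a r, HasDerivAt f (f' y) y) (hfa : f a = 0)
    (hf' : ∀ y ∈ closedBall a r, ‖f' y‖ ≤ c * ‖y - a‖ ^ n / n !) (hx : x ∈ closedBall a r) :
    ‖f x‖ ≤ c * ‖x - a‖ ^ (n + 1) / (n + 1)! := by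
  set ρ := ‖x - a‖
  have hg : ∀ t ∈ Icc (0 : ℝ) 1, HasDerivAt (fun s : ℝ => f (a + s * (x - a)))
      ((x - a) • f' (a + t * (x - a))) t := fun t ht =>
    hasDerivAt_comp_segment (hf _ (segment_mem_closedBall hx ht))
  have hB : ∀ t : ℝ, HasDerivAt (fun s => c * (s * ρ) ^ (n + 1) / (n + 1)!)
      (ρ * (c * (t * ρ) ^ n / n !)) t := by
    intro t
    refine ((((hasDerivAt_id' t).mul_const ρ).pow (n + 1)).const_mul c).div_const
      ((n + 1)! : ℝ) |>.congr_deriv ?_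
    rw [Nat.factorial_succ]
    push_cast
    field_simp
  have key := image_norm_le_of_norm_deriv_right_le_deriv_boundary' (a := 0) (b := 1)
    (fun t ht => (hg t ht).continuousAt.continuousWithinAt)
    (fun t ht => (hg t (Ico_subset_Icc_self ht)).hasDerivWithinAt)
    (B := fun s => c * (s * ρ) ^ (n + 1) / (n + 1)!) (by simp [hfa])
    (fun t _ => (hB t).continuousAt.continuousWithinAt)
    (fun t _ => (hB t).hasDerivWithinAt)
    (fun t ht => by
      rw [norm_smul]
      gcongr
      have h := hf' _ (segment_mem_closedBall hx (Ico_subset_Icc_self ht))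
      rwa [norm_segment_sub ht.1] at h)
    (right_mem_Icc.mpr zero_le_one)
  simpa using key

end Segment

theorem Matrix.map_eval_mul {R : Type*} [CommSemiring R] {ι : Type*} [Fintype ι]
    (P Q : Matrix ι ι R[X]) (x : R) : (P * Q).map (eval x) = P.map (eval x) * Q.map (eval x) :=
  Matrix.map_mul (f := evalRingHom x)

theorem hasDerivAt_map_eval {ι κ : Type*} [Fintype κ] (P : Matrix ι κ ℂ[X]) (x : ℂ) :
    HasDerivAt (fun y => P.map (eval y)) ((P.map derivative).map (eval x)) x :=
  hasDerivAt_matrix_iff.mpr fun i j => (P i j).hasDerivAt x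

theorem continuous_map_eval {ι κ : Type*} (P : Matrix ι κ ℂ[X]) :
    Continuous fun y => P.map (eval y) :=
  continuous_pi fun i => continuous_pi fun j => (P i j).continuous

section Picard

variable {ι : Type*} [Fintype ι] (M : Matrix ι ι ℂ[X]) (a : ℂ) (Φ₀ : Matrix ι ι ℂ)

-- `Φ₀ + ∑ n, picardTerm M a Φ₀ (n + 1)` is the Picard series of `Φ' = M Φ`, `Φ a = Φ₀`.
noncomputable def picardTerm : ℕ → Matrix ι ι ℂ[X]
  | 0 => Φ₀.map C
  | n + 1 => (M * picardTerm n).map (antiderivFrom a)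

theorem map_derivative_picardTerm_succ (n : ℕ) :
    (picardTerm M a Φ₀ (n + 1)).map derivative = M * picardTerm M a Φ₀ n := by
  ext i j
  simp [picardTerm]

@[simp]
theorem map_eval_picardTerm_zero (x : ℂ) : (picardTerm M a Φ₀ 0).map (eval x) = Φ₀ := by
  ext i j
  simp [picardTerm]

@[simp]
theorem map_eval_picardTerm_succ_self (n : ℕ) : (picardTerm M a Φ₀ (n + 1)).map (eval a) = 0 := by
  ext i j
  simp [picardTerm]

theorem hasDerivAt_map_eval_picardTerm_succ (n : ℕ) (x : ℂ) :
    HasDerivAt (fun y => (picardTerm M a Φ₀ (n + 1)).map (eval y))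
      (M.map (eval x) * (picardTerm M a Φ₀ n).map (eval x)) x := by
  simpa [map_derivative_picardTerm_succ, Matrix.map_eval_mul] using
    hasDerivAt_map_eval (picardTerm M a Φ₀ (n + 1)) x

theorem norm_map_eval_picardTerm_le {r K : ℝ} (hM : ∀ y ∈ closedBall a r, ‖M.map (eval y)‖ ≤ K)
    (n : ℕ) {x : ℂ} (hx : x ∈ closedBall a r) :
    ‖(picardTerm M a Φ₀ n).map (eval x)‖ ≤ ‖Φ₀‖ * K ^ n * ‖x - a‖ ^ n / n ! := by
  induction n generalizing x with
  | zero => simp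
  | succ n ih =>
    have hK : 0 ≤ K := (norm_nonneg _).trans (hM x hx)
    refine (norm_le_of_norm_deriv_le_pow_div_factorial (E := Matrix ι ι ℂ)
      (f := fun y => (picardTerm M a Φ₀ (n + 1)).map (eval y))
      (f' := fun y => M.map (eval y) * (picardTerm M a Φ₀ n).map (eval y))
      (c := ‖Φ₀‖ * K ^ (n + 1)) (fun y _ => hasDerivAt_map_eval_picardTerm_succ M a Φ₀ n y)
      (map_eval_picardTerm_succ_self M a Φ₀ n) (fun y hy => ?_) hx).trans_eq (by ring)
    calc ‖M.map (eval y) * (picardTerm M a Φ₀ n).map (eval y)‖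
        ≤ ‖M.map (eval y)‖ * ‖(picardTerm M a Φ₀ n).map (eval y)‖ := linfty_opNorm_mul _ _
      _ ≤ K * (‖Φ₀‖ * K ^ n * ‖y - a‖ ^ n / n !) := by gcongr; exacts [hM y hy, ih hy]
      _ = ‖Φ₀‖ * K ^ (n + 1) * ‖y - a‖ ^ n / n ! := by ring

theorem exists_hasDerivAt_eq_map_eval_mul :
    ∃ Φ : ℂ → Matrix ι ι ℂ, (∀ x, HasDerivAt Φ (M.map (eval x) * Φ x) x) ∧ Φ a = Φ₀ := by
  refine ⟨fun x => Φ₀ + ∑' n, (picardTerm M a Φ₀ (n + 1)).map (eval x), fun x => ?_, by simp⟩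
  set R := ‖x - a‖ + 1
  obtain ⟨K, hK⟩ := (isCompact_closedBall a R).exists_bound_of_continuousOn
    (continuous_map_eval M).continuousOn
  have hK0 : 0 ≤ K := (norm_nonneg _).trans (hK a (mem_closedBall_self (by positivity)))
  have hterm : ∀ n, ∀ y ∈ closedBall a R,
      ‖(picardTerm M a Φ₀ n).map (eval y)‖ ≤ ‖Φ₀‖ * ((K * R) ^ n / n !) := by
    intro n y hy
    refine (norm_map_eval_picardTerm_le M a Φ₀ hK n hy).trans ?_
    rw [mul_pow, ← mul_div_assoc, ← mul_assoc]
    gcongr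
    simpa [dist_eq_norm] using hy
  have hsummable : ∀ y ∈ closedBall a R,
      Summable fun n => (picardTerm M a Φ₀ n).map (eval y) := fun y hy =>
    .of_norm_bounded ((Real.summable_pow_div_factorial (K * R)).mul_left ‖Φ₀‖) fun n =>
      hterm n y hy
  have hx : x ∈ ball a R := by simp [R, dist_eq_norm]
  have hderiv := hasDerivAt_tsum_of_isPreconnected
    (g := fun n y => (picardTerm M a Φ₀ (n + 1)).map (eval y))
    (g' := fun n y => M.map (eval y) * (picardTerm M a Φ₀ n).map (eval y))
    ((Real.summable_pow_div_factorial (K * R)).mul_left ‖Φ₀‖ |>.mul_left K)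
    isOpen_ball (convex_ball a R).isPreconnected
    (fun n y _ => hasDerivAt_map_eval_picardTerm_succ M a Φ₀ n y)
    (fun n y hy => (linfty_opNorm_mul _ _).trans (mul_le_mul (hK y (ball_subset_closedBall hy))
      (hterm n y (ball_subset_closedBall hy)) (norm_nonneg _) hK0))
    (mem_ball_self (by positivity)) (by simp) hx
  refine (hderiv.const_add Φ₀).congr_deriv ?_
  have hsx := hsummable x (ball_subset_closedBall hx)
  exact (hsx.tsum_mul_left _).trans (by rw [hsx.tsum_eq_zero_add, map_eval_picardTerm_zero])

end Picard

theorem exists_riccati_linearization {ι : Type*} [Fintype ι] [DecidableEq ι]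
    (A B C : Matrix ι ι ℂ[X]) (a : ℂ) (Y₀ : Matrix ι ι ℂ) :
    ∃ W U : ℂ → Matrix ι ι ℂ,
      (∀ x, HasDerivAt W (-(C.map (eval x) * U x)) x) ∧
      (∀ x, HasDerivAt U (A.map (eval x) * W x + B.map (eval x) * U x) x) ∧
      W a = 1 ∧ U a = Y₀ := by
  -- `Φ = !![W, _; U, _]` solves `Φ' = !![0, -C; A, B] Φ`.
  obtain ⟨Φ, hΦ, hΦa⟩ :=
    exists_hasDerivAt_eq_map_eval_mul (fromBlocks 0 (-C) A B) a (fromBlocks 1 0 Y₀ 0)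
  refine ⟨fun x => (Φ x).toBlocks₁₁, fun x => (Φ x).toBlocks₂₁, fun x => ?_, fun x => ?_,
    by simp [hΦa], by simp [hΦa]⟩ <;>
  refine hasDerivAt_matrix_iff.mpr fun i j => ?_
  · simpa [mul_apply, Fintype.sum_sum_type, toBlocks₁₁, toBlocks₂₁] using
      hasDerivAt_matrix_iff.mp (hΦ x) (.inl i) (.inl j)
  · simpa [mul_apply, Fintype.sum_sum_type, toBlocks₁₁, toBlocks₂₁] using
      hasDerivAt_matrix_iff.mp (hΦ x) (.inr i) (.inl j)

section Analytic

variable {𝕜 : Type*} [NontriviallyNormedField 𝕜] {m : Type*} [Fintype m] [DecidableEq m]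

theorem AnalyticAt.matrix_det {M : 𝕜 → Matrix m m 𝕜} {z : 𝕜}
    (h : ∀ i j, AnalyticAt 𝕜 (fun x => M x i j) z) : AnalyticAt 𝕜 (fun x => (M x).det) z := by
  simp only [det_apply']
  exact Finset.analyticAt_fun_sum _ fun σ _ =>
    analyticAt_const.mul (Finset.analyticAt_fun_prod _ fun i _ => h (σ i) i)

theorem AnalyticAt.matrix_adjugate {M : 𝕜 → Matrix m m 𝕜} {z : 𝕜}
    (h : ∀ i j, AnalyticAt 𝕜 (fun x => M x i j) z) (i j : m) :
    AnalyticAt 𝕜 (fun x => (M x).adjugate i j) z := by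
  simp only [adjugate_apply]
  refine AnalyticAt.matrix_det fun k l => ?_
  simp only [updateRow_apply]
  split_ifs
  exacts [analyticAt_const, h k l]

theorem MeromorphicAt.matrix_mul_inv {U W : 𝕜 → Matrix m m 𝕜} {z : 𝕜}
    (hU : ∀ i j, AnalyticAt 𝕜 (fun x => U x i j) z) (hW : ∀ i j, AnalyticAt 𝕜 (fun x => W x i j) z)
    (i j : m) : MeromorphicAt (fun x => (U x * (W x)⁻¹) i j) z := by
  simp only [inv_def, Ring.inverse_eq_inv', Matrix.mul_smul, Matrix.smul_apply, smul_eq_mul]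
  exact (AnalyticAt.matrix_det hW).meromorphicAt.inv.mul <| (Finset.analyticAt_fun_sum _
    fun k _ => (hU i k).mul (AnalyticAt.matrix_adjugate hW k j)).meromorphicAt

end Analytic

section Riccati

variable {𝔸 : Type*} [NormedRing 𝔸] [NormedAlgebra ℂ 𝔸]

theorem HasDerivAt.sub_mul_of_riccati {W U Y : ℂ → 𝔸} {a b c : 𝔸} {x : ℂ}
    (hW : HasDerivAt W (-(c * U x)) x) (hU : HasDerivAt U (a * W x + b * U x) x)
    (hY : HasDerivAt Y (a + b * Y x + Y x * c * Y x) x) :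
    HasDerivAt (fun y => U y - Y y * W y) ((b + Y x * c) * (U x - Y x * W x)) x :=
  (hU.sub (hY.mul hW)).congr_deriv (by noncomm_ring)

theorem eventuallyEq_zero_of_hasDerivAt_mul {Z N : ℂ → 𝔸} {a : ℂ}
    (hZ : ∀ᶠ y in 𝓝 a, HasDerivAt Z (N y * Z y) y) (hN : ContinuousAt N a) (ha : Z a = 0) :
    Z =ᶠ[𝓝 a] 0 := by
  obtain ⟨r, hr, hball⟩ := eventually_nhds_iff_ball.mp
    (hZ.and (hN.norm.eventually (gt_mem_nhds (lt_add_one ‖N a‖))))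
  filter_upwards [ball_mem_nhds a hr] with x hx
  have hseg : ∀ t ∈ Icc (0 : ℝ) 1, a + t * (x - a) ∈ ball a r := fun t ht =>
    closedBall_subset_ball (mem_ball_iff_norm.mp hx)
      (segment_mem_closedBall (mem_closedBall_iff_norm.mpr le_rfl) ht)
  have hg : ∀ t ∈ Icc (0 : ℝ) 1, HasDerivAt (fun s : ℝ => Z (a + s * (x - a)))
      ((x - a) • (N (a + t * (x - a)) * Z (a + t * (x - a)))) t := fun t ht =>
    hasDerivAt_comp_segment (hball _ (hseg t ht)).1
  have key := norm_le_gronwallBound_of_norm_deriv_right_le (δ := 0) (ε := 0)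
    (K := ‖x - a‖ * (‖N a‖ + 1))
    (fun t ht => (hg t ht).continuousAt.continuousWithinAt)
    (fun t ht => (hg t (Ico_subset_Icc_self ht)).hasDerivWithinAt) (by simp [ha])
    (fun t ht => by
      rw [norm_smul, add_zero, mul_assoc]
      gcongr
      exact (norm_mul_le _ _).trans (by
        gcongr; exact (hball _ (hseg t (Ico_subset_Icc_self ht))).2.le))
    1 (right_mem_Icc.mpr zero_le_one)
  simpa [gronwallBound_ε0_δ0] using key

theorem riccati_mul_eq_of_linearization [CompleteSpace 𝔸] {α β γ W U Y : ℂ → 𝔸} {Ω : Set ℂ}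
    {a : ℂ} (hΩ : IsOpen Ω) (hΩc : IsPreconnected Ω) (ha : a ∈ Ω)
    (hβ : ContinuousAt β a) (hγ : ContinuousAt γ a)
    (hW : ∀ x ∈ Ω, HasDerivAt W (-(γ x * U x)) x)
    (hU : ∀ x ∈ Ω, HasDerivAt U (α x * W x + β x * U x) x)
    (hY : ∀ x ∈ Ω, HasDerivAt Y (α x + β x * Y x + Y x * γ x * Y x) x)
    (hWa : W a = 1) (hUa : U a = Y a) :
    EqOn (fun x => Y x * W x) U Ω := by
  set Z := fun y => U y - Y y * W y
  have hZ : ∀ x ∈ Ω, HasDerivAt Z ((β x + Y x * γ x) * Z x) x := fun x hx =>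
    (hW x hx).sub_mul_of_riccati (hU x hx) (hY x hx)
  have hZa : Z =ᶠ[𝓝 a] 0 := eventuallyEq_zero_of_hasDerivAt_mul
    (eventually_of_mem (hΩ.mem_nhds ha) hZ) (hβ.add ((hY a ha).continuousAt.mul hγ))
    (by simp [Z, hWa, hUa])
  have hZΩ : AnalyticOnNhd ℂ Z Ω := DifferentiableOn.analyticOnNhd
    (fun x hx => (hZ x hx).differentiableAt.differentiableWithinAt) hΩ
  exact fun x hx => (sub_eq_zero.mp (hZΩ.eqOn_zero_of_preconnected_of_eventuallyEq_zero
    hΩc ha hZa hx)).symm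

end Riccati

theorem exists_meromorphic_eqOn_of_mul_eq {ι : Type*} [Fintype ι] [DecidableEq ι]
    {Y W U : ℂ → Matrix ι ι ℂ} {Ω : Set ℂ} {a : ℂ}
    (hW : ∀ x i j, DifferentiableAt ℂ (fun y => W y i j) x)
    (hU : ∀ x i j, DifferentiableAt ℂ (fun y => U y i j) x) (hWa : (W a).det ≠ 0)
    (hYWU : EqOn (fun x => Y x * W x) U Ω) :
    ∃ Ym : ℂ → Matrix ι ι ℂ, (∀ i j, MeromorphicOn (fun x => Ym x i j) univ) ∧ EqOn Ym Y Ω := by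
  classical
  have hWan : ∀ z i j, AnalyticAt ℂ (fun y => W y i j) z := fun z i j =>
    Differentiable.analyticAt (fun x => hW x i j) z
  have hUan : ∀ z i j, AnalyticAt ℂ (fun y => U y i j) z := fun z i j =>
    Differentiable.analyticAt (fun x => hU x i j) z
  have hdet : AnalyticOnNhd ℂ (fun x => (W x).det) univ := fun z _ => .matrix_det (hWan z)
  refine ⟨fun x => if x ∈ Ω then Y x else U x * (W x)⁻¹, fun i j z _ => ?_, fun x hx => if_pos hx⟩
  have hne : ∀ᶠ x in 𝓝[≠] z, (W x).det ≠ 0 :=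
    (hdet z trivial).eventually_eq_zero_or_eventually_ne_zero.resolve_left fun h =>
      hWa (hdet.eqOn_zero_of_preconnected_of_eventuallyEq_zero isPreconnected_univ trivial h
        trivial)
  refine (MeromorphicAt.matrix_mul_inv (hUan z) (hWan z) i j).congr ?_
  filter_upwards [hne] with x hx
  split_ifs with hxΩ
  · rw [← hYWU hxΩ, mul_nonsing_inv_cancel_right _ _ (isUnit_iff_ne_zero.mpr hx)]
  · rfl

theorem Polynomial.isConnected_setOf_eval_ne_zero {p : ℂ[X]} (hp : p ≠ 0) :
    IsConnected {x | p.eval x ≠ 0} :=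
  (finite_setOfPred_isRoot hp).countable.isConnected_compl_of_one_lt_rank
    (by simp [Complex.rank_real_complex])

theorem hasDerivAt_matDeriv {N : ℕ} {Y : ℂ → Matrix (Fin N) (Fin N) ℂ} {x : ℂ}
    (h : ∀ i j, DifferentiableAt ℂ (fun y => Y y i j) x) : HasDerivAt Y (matDeriv Y x) x :=
  hasDerivAt_matrix_iff.mpr fun i j => (h i j).hasDerivAt

theorem riccati_uniform_meromorphic_general {N : ℕ}
    (A B C : Matrix (Fin N) (Fin N) (Polynomial ℂ)) (hC : C.det ≠ 0)
    (Y : ℂ → Matrix (Fin N) (Fin N) ℂ)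
    (hYdiff : ∀ i j, DifferentiableOn ℂ (fun x => Y x i j) {x | C.det.eval x ≠ 0})
    (hYeq : ∀ x : ℂ, C.det.eval x ≠ 0 →
      matDeriv Y x =
        (A.map fun p => p.eval x) + (B.map fun p => p.eval x) * Y x +
          Y x * (C.map fun p => p.eval x) * Y x) :
    ∃ Ym : ℂ → Matrix (Fin N) (Fin N) ℂ,
      (∀ i j, MeromorphicOn (fun x => Ym x i j) Set.univ) ∧
        ∀ x : ℂ, C.det.eval x ≠ 0 → Ym x = Y x := by
  set Ω := {x : ℂ | C.det.eval x ≠ 0}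
  have hΩ : IsOpen Ω := isOpen_ne_fun C.det.continuous continuous_const
  obtain ⟨⟨a, ha⟩, hΩc⟩ := Polynomial.isConnected_setOf_eval_ne_zero hC
  have hY : ∀ x ∈ Ω, HasDerivAt Y
      (A.map (eval x) + B.map (eval x) * Y x + Y x * C.map (eval x) * Y x) x := fun x hx =>
    hYeq x hx ▸ hasDerivAt_matDeriv fun i j => (hYdiff i j).differentiableAt (hΩ.mem_nhds hx)
  obtain ⟨W, U, hW, hU, hWa, hUa⟩ := exists_riccati_linearization A B C a (Y a)
  have hYWU := riccati_mul_eq_of_linearization (𝔸 := Matrix (Fin N) (Fin N) ℂ) hΩ hΩc ha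
    (continuous_map_eval B).continuousAt (continuous_map_eval C).continuousAt
    (fun x _ => hW x) (fun x _ => hU x) hY hWa hUa
  exact exists_meromorphic_eqOn_of_mul_eq (a := a)
    (fun x i j => (hasDerivAt_matrix_iff.mp (hW x) i j).differentiableAt)
    (fun x i j => (hasDerivAt_matrix_iff.mp (hU x) i j).differentiableAt) (by simp [hWa]) hYWU

/-- **Theorem 6(2).** If every point of `Z = {c₁ = 0}` is a regular singular point of the
associated operator `P`, then every solution of the Riccati equation
`Y′ = A + BY + YCY` which is holomorphic (single-valued) on `ℂ∖Z` extends to a matrix of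
functions meromorphic on all of `ℂ`. -/
theorem riccati_uniform_meromorphic {N : ℕ} (hN : 1 ≤ N)
    (A B C : Matrix (Fin N) (Fin N) (Polynomial ℂ)) (hC : C.det ≠ 0)
    (hreg : RegularSingular (RicA2 C) (RicA1 B C) (RicA0 A C) C.det)
    (Y : ℂ → Matrix (Fin N) (Fin N) ℂ)
    (hYdiff : ∀ i j, DifferentiableOn ℂ (fun x => Y x i j) {x | C.det.eval x ≠ 0})
    (hYeq : ∀ x : ℂ, C.det.eval x ≠ 0 →
      matDeriv Y x =
        (A.map fun p => p.eval x) + (B.map fun p => p.eval x) * Y x +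
          Y x * (C.map fun p => p.eval x) * Y x) :
    ∃ Ym : ℂ → Matrix (Fin N) (Fin N) ℂ,
      (∀ i j, MeromorphicOn (fun x => Ym x i j) Set.univ) ∧
        ∀ x : ℂ, C.det.eval x ≠ 0 → Ym x = Y x :=
  riccati_uniform_meromorphic_general A B C hC Y hYdiff hYeq
end
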